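/- Let A, B ⊆ ℝ² be nonempty closed convex cones and let x ∈ ℝ². If the three points x, R_A(x) and R_B(R_A(x)) are pairwise distinct, then they are not collinear, the origin 0 is the unique circumcenter of x with respect to (A, B), and 0 ∈ A ∩ B; hence C_T(x) = 0 is a feasible point. -/

import Mathlib

open RealInnerProductSpace Pointwise

/-- `p` is the metric projection of `x` onto `C`: the point of `C` such that
`⟪y - p, x - p⟫ ≤ 0` for all `y ∈ C`. -/
def IsProj {E : Type*} [NormedAddCommGroup E] [InnerProductSpace ℝ E]
    (C : Set E) (x p : E) : Prop :=
  p ∈ C ∧ ∀ y ∈ C, ⟪y - p, x - p⟫ ≤ 0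

/-- `c` is a circumcenter of `x` with respect to `(A, B)`: writing `R_A x = 2 P_A x - x`
and `R_B (R_A x) = 2 P_B (R_A x) - R_A x`, the point `c` lies in the affine span of
`{x, R_A x, R_B (R_A x)}` and is equidistant from these three points. -/
def IsCircumcenter {E : Type*} [NormedAddCommGroup E] [InnerProductSpace ℝ E]
    (A B : Set E) (x c : E) : Prop :=
  ∃ pa pb : E, IsProj A x pa ∧ IsProj B ((2 : ℝ) • pa - x) pb ∧
    c ∈ affineSpan ℝ
      ({x, (2 : ℝ) • pa - x, (2 : ℝ) • pb - ((2 : ℝ) • pa - x)} : Set E) ∧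
    ‖c - x‖ = ‖c - ((2 : ℝ) • pa - x)‖ ∧
    ‖c - x‖ = ‖c - ((2 : ℝ) • pb - ((2 : ℝ) • pa - x))‖

/-! Since `P_C x ⟂ x - P_C x` for a cone `C`, reflection in a cone preserves the norm, so `x`,
`R_A x` and `R_B (R_A x)` lie on a circle about `0`. Three distinct points of a circle are
affinely independent, hence span the plane, and a triangle has exactly one circumcenter in its
affine span: the centre `0` of that circle. -/

open EuclideanGeometry

theorem Matrix.range_cons_cons_cons_empty {α : Type*} (x y z : α) (u : Fin 0 → α) :
    Set.range (Matrix.vecCons x <| Matrix.vecCons y <| Matrix.vecCons z u) = {x, y, z} := by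
  rw [Matrix.range_cons, Matrix.range_cons_cons_empty, Set.singleton_union]

section

variable {E : Type*} [NormedAddCommGroup E] [InnerProductSpace ℝ E]

theorem IsProj.unique {C : Set E} {x p q : E} (hp : IsProj C x p) (hq : IsProj C x q) :
    p = q := by
  have hsum : ⟪q - p, q - p⟫ = ⟪q - p, x - p⟫ + ⟪p - q, x - q⟫ := by
    simp only [inner_sub_left, inner_sub_right]
    ring
  have hle : ⟪q - p, q - p⟫ ≤ 0 := by linarith [hp.2 q hq.1, hq.2 p hp.1]
  exact (sub_eq_zero.1 (real_inner_self_nonpos.1 hle)).symm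

variable {C : Set E}

theorem IsProj.zero_mem_of_cone {x p : E} (hC : ∀ l : ℝ, 0 ≤ l → ∀ y ∈ C, l • y ∈ C)
    (hp : IsProj C x p) : (0 : E) ∈ C := by
  simpa using hC 0 le_rfl p hp.1

/-- Testing the projection inequality against `0` and `2 • p` gives both signs. -/
theorem IsProj.inner_sub_eq_zero_of_cone {x p : E} (hC : ∀ l : ℝ, 0 ≤ l → ∀ y ∈ C, l • y ∈ C)
    (hp : IsProj C x p) : ⟪p, x - p⟫ = 0 := by
  have h0 := hp.2 0 (hp.zero_mem_of_cone hC)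
  have h2 := hp.2 ((2 : ℝ) • p) (hC 2 zero_le_two p hp.1)
  rw [zero_sub, inner_neg_left] at h0
  rw [two_smul, add_sub_cancel_right] at h2
  linarith

theorem IsProj.norm_reflect_of_cone {x p : E} (hC : ∀ l : ℝ, 0 ≤ l → ∀ y ∈ C, l • y ∈ C)
    (hp : IsProj C x p) :
    ‖(2 : ℝ) • p - x‖ = ‖x‖ := by
  have horth := hp.inner_sub_eq_zero_of_cone hC
  rw [inner_sub_right, real_inner_self_eq_norm_sq] at horth
  refine sq_eq_sq₀ (norm_nonneg _) (norm_nonneg _) |>.1 ?_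
  rw [norm_sub_sq_real, norm_smul, real_inner_smul_left, Real.norm_ofNat]
  linarith

theorem affineIndependent_of_norm_eq {p₁ p₂ p₃ : E} (h₂ : ‖p₂‖ = ‖p₁‖) (h₃ : ‖p₃‖ = ‖p₁‖)
    (h₁₂ : p₁ ≠ p₂) (h₁₃ : p₁ ≠ p₃) (h₂₃ : p₂ ≠ p₃) :
    AffineIndependent ℝ ![p₁, p₂, p₃] := by
  refine Cospherical.affineIndependent_of_ne ⟨0, ‖p₁‖, ?_⟩ h₁₂ h₁₃ h₂₃
  simp [h₂, h₃]

theorem affineSpan_eq_top_of_affineIndependent [FiniteDimensional ℝ E]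
    (hE : Module.finrank ℝ E = 2) {p₁ p₂ p₃ : E} (hp : AffineIndependent ℝ ![p₁, p₂, p₃]) :
    affineSpan ℝ {p₁, p₂, p₃} = ⊤ := by
  rw [← Matrix.range_cons_cons_cons_empty p₁ p₂ p₃ ![],
    hp.affineSpan_eq_top_iff_card_eq_finrank_add_one, hE, Fintype.card_fin]

theorem eq_of_mem_affineSpan_of_norm_sub_eq {p₁ p₂ p₃ c c' : E}
    (hp : AffineIndependent ℝ ![p₁, p₂, p₃])
    (hc : c ∈ affineSpan ℝ {p₁, p₂, p₃}) (hc₂ : ‖c - p₁‖ = ‖c - p₂‖) (hc₃ : ‖c - p₁‖ = ‖c - p₃‖)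
    (hc' : c' ∈ affineSpan ℝ {p₁, p₂, p₃}) (hc'₂ : ‖c' - p₁‖ = ‖c' - p₂‖)
    (hc'₃ : ‖c' - p₁‖ = ‖c' - p₃‖) : c = c' := by
  let t : Affine.Simplex ℝ E 2 := ⟨_, hp⟩
  have key : ∀ d ∈ affineSpan ℝ {p₁, p₂, p₃}, ‖d - p₁‖ = ‖d - p₂‖ → ‖d - p₁‖ = ‖d - p₃‖ →
      d = t.circumcenter := by
    intro d hd h₂ h₃
    refine t.eq_circumcenter_of_dist_eq (r := ‖d - p₁‖) ?_ ?_
    · rwa [Matrix.range_cons_cons_cons_empty]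
    · simp [t, Fin.forall_fin_succ, dist_eq_norm, norm_sub_rev, ← h₂, ← h₃]
  rw [key c hc hc₂ hc₃, key c' hc' hc'₂ hc'₃]

end

theorem crm_cones_R2_distinct_circumcenter_zero_general
    (A B : Set (EuclideanSpace ℝ (Fin 2)))
    (hAcone : ∀ l : ℝ, 0 ≤ l → ∀ y ∈ A, l • y ∈ A)
    (hBcone : ∀ l : ℝ, 0 ≤ l → ∀ y ∈ B, l • y ∈ B)
    (x pa pb : EuclideanSpace ℝ (Fin 2))
    (hpa : IsProj A x pa) (hpb : IsProj B ((2 : ℝ) • pa - x) pb)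
    (h₁ : x ≠ (2 : ℝ) • pa - x)
    (h₂ : x ≠ (2 : ℝ) • pb - ((2 : ℝ) • pa - x))
    (h₃ : (2 : ℝ) • pa - x ≠ (2 : ℝ) • pb - ((2 : ℝ) • pa - x)) :
    ¬ Collinear ℝ
        ({x, (2 : ℝ) • pa - x, (2 : ℝ) • pb - ((2 : ℝ) • pa - x)} :
          Set (EuclideanSpace ℝ (Fin 2))) ∧
    IsCircumcenter A B x 0 ∧
    (∀ c : EuclideanSpace ℝ (Fin 2), IsCircumcenter A B x c → c = 0) ∧
    (0 : EuclideanSpace ℝ (Fin 2)) ∈ A ∩ B := by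
  set u := (2 : ℝ) • pa - x
  set w := (2 : ℝ) • pb - u
  have hu : ‖u‖ = ‖x‖ := hpa.norm_reflect_of_cone hAcone
  have hw : ‖w‖ = ‖x‖ := (hpb.norm_reflect_of_cone hBcone).trans hu
  have hind : AffineIndependent ℝ ![x, u, w] := affineIndependent_of_norm_eq hu hw h₁ h₂ h₃
  have hspan : affineSpan ℝ {x, u, w} = ⊤ :=
    affineSpan_eq_top_of_affineIndependent finrank_euclideanSpace_fin hind
  have hzero_mem : (0 : EuclideanSpace ℝ (Fin 2)) ∈ affineSpan ℝ {x, u, w} := hspan ▸ trivial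
  have hzero₂ : ‖0 - x‖ = ‖0 - u‖ := by simp [hu]
  have hzero₃ : ‖0 - x‖ = ‖0 - w‖ := by simp [hw]
  refine ⟨affineIndependent_iff_not_collinear_set.1 hind,
    ⟨pa, pb, hpa, hpb, hzero_mem, hzero₂, hzero₃⟩, ?_,
    hpa.zero_mem_of_cone hAcone, hpb.zero_mem_of_cone hBcone⟩
  rintro c ⟨pa', pb', hpa', hpb', hc, hc₂, hc₃⟩
  obtain rfl := hpa'.unique hpa
  obtain rfl := hpb'.unique hpb
  exact eq_of_mem_affineSpan_of_norm_sub_eq hind hc hc₂ hc₃ hzero_mem hzero₂ hzero₃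

/-- Let `A, B ⊆ ℝ²` be nonempty closed convex cones, `x ∈ ℝ²`, `pa = P_A x`,
`pb = P_B (R_A x)`. If the three points `x`, `R_A x` and `R_B (R_A x)` are pairwise distinct,
then they are not collinear, the origin is the unique circumcenter of `x` with respect to
`(A, B)`, and `0 ∈ A ∩ B`. -/
theorem crm_cones_R2_distinct_circumcenter_zero
    (A B : Set (EuclideanSpace ℝ (Fin 2)))
    (hAne : A.Nonempty) (hAcl : IsClosed A) (hAcv : Convex ℝ A)
    (hAcone : ∀ l : ℝ, 0 ≤ l → ∀ y ∈ A, l • y ∈ A)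
    (hBne : B.Nonempty) (hBcl : IsClosed B) (hBcv : Convex ℝ B)
    (hBcone : ∀ l : ℝ, 0 ≤ l → ∀ y ∈ B, l • y ∈ B)
    (x pa pb : EuclideanSpace ℝ (Fin 2))
    (hpa : IsProj A x pa) (hpb : IsProj B ((2 : ℝ) • pa - x) pb)
    (h₁ : x ≠ (2 : ℝ) • pa - x)
    (h₂ : x ≠ (2 : ℝ) • pb - ((2 : ℝ) • pa - x))
    (h₃ : (2 : ℝ) • pa - x ≠ (2 : ℝ) • pb - ((2 : ℝ) • pa - x)) :
    ¬ Collinear ℝ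
        ({x, (2 : ℝ) • pa - x, (2 : ℝ) • pb - ((2 : ℝ) • pa - x)} :
          Set (EuclideanSpace ℝ (Fin 2))) ∧
    IsCircumcenter A B x 0 ∧
    (∀ c : EuclideanSpace ℝ (Fin 2), IsCircumcenter A B x c → c = 0) ∧
    (0 : EuclideanSpace ℝ (Fin 2)) ∈ A ∩ B :=
  crm_cones_R2_distinct_circumcenter_zero_general A B hAcone hBcone x pa pb hpa hpb h₁ h₂ h₃
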